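/- Fix natural numbers g and p and let σ be the ℚ-algebra automorphism of ℚ(t,u,v) fixing u and v and sending t ↦ 1/(tuv). For every natural number n, σ( Σ_{|λ|=n} ℋ^{(p)}_λ(t,u,v) ) = Σ_{|λ|=n} ℋ^{(p)}_λ(t,u,v), the sums running over all partitions λ of n. (Lemma 'A property': the generating series A_{+∞}(s,T) = Σ_λ ℋ^{(p)}_λ T^{|λ|} satisfies A_{+∞}(s,T) = A_{+∞}(s^{−1},T), since s ↦ s^{−1} corresponds to t ↦ 1/(tuv).) -/
import Mathlib


/-- The arm length `a(x) = λ_i − j` of a box of a Young diagram (0-indexed cells). -/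
def YoungDiagram.armLen (μ : YoungDiagram) (c : ℕ × ℕ) : ℕ :=
  μ.rowLen c.1 - (c.2 + 1)

/-- The leg length `l(x) = λ'_j − i` of a box of a Young diagram (0-indexed cells). -/
def YoungDiagram.legLen (μ : YoungDiagram) (c : ℕ × ℕ) : ℕ :=
  μ.colLen c.2 - (c.1 + 1)

/-- The hook length `h(x) = a(x) + l(x) + 1` of a box of a Young diagram. -/
def YoungDiagram.hookLen (μ : YoungDiagram) (c : ℕ × ℕ) : ℕ :=
  μ.armLen c + μ.legLen c + 1

/-- The rational function field `ℚ(t,u,v)`. -/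
noncomputable abbrev K3 : Type := FractionRing (MvPolynomial (Fin 3) ℚ)

/-- The variable `t` of `ℚ(t,u,v)`. -/
noncomputable def tK : K3 := algebraMap (MvPolynomial (Fin 3) ℚ) K3 (MvPolynomial.X 0)

/-- The variable `u` of `ℚ(t,u,v)`. -/
noncomputable def uK : K3 := algebraMap (MvPolynomial (Fin 3) ℚ) K3 (MvPolynomial.X 1)

/-- The variable `v` of `ℚ(t,u,v)`. -/
noncomputable def vK : K3 := algebraMap (MvPolynomial (Fin 3) ℚ) K3 (MvPolynomial.X 2)

/-- `Z(s) = (1−su)^g (1−sv)^g / ((1−suv)(1−s))`, as a function of `s ∈ ℚ(t,u,v)`. -/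
noncomputable def Zg (g : ℕ) (s : K3) : K3 :=
  (1 - s * uK) ^ g * (1 - s * vK) ^ g / ((1 - s * uK * vK) * (1 - s))

/-- `ℋ^{(p)}_λ(t,u,v) = ∏_{x∈d(λ)} (−t^{a(x)−l(x)} (uv)^{a(x)})^p · t^{(1−g)(2l(x)+1)}
  · Z(t^{h(x)} (uv)^{a(x)})` in `ℚ(t,u,v)`. -/
noncomputable def Hp (g p : ℕ) (μ : YoungDiagram) : K3 :=
  ∏ x ∈ μ.cells,
    ((-(tK ^ ((μ.armLen x : ℤ) - (μ.legLen x : ℤ)) * (uK * vK) ^ μ.armLen x)) ^ p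
      * tK ^ (((1 : ℤ) - g) * (2 * (μ.legLen x : ℤ) + 1))
      * Zg g (tK ^ μ.hookLen x * (uK * vK) ^ μ.armLen x))

lemma tK_ne : tK ≠ 0 := by
  simp [tK, IsFractionRing.to_map_eq_zero_iff, MvPolynomial.X_ne_zero]

lemma uK_ne : uK ≠ 0 := by
  simp [uK, IsFractionRing.to_map_eq_zero_iff, MvPolynomial.X_ne_zero]

lemma vK_ne : vK ≠ 0 := by
  simp [vK, IsFractionRing.to_map_eq_zero_iff, MvPolynomial.X_ne_zero]

/-- Monomial helper: `t^e (uv)^f`. -/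
noncomputable def MMt (e f : ℤ) : K3 := tK ^ e * (uK * vK) ^ f

lemma qK_ne : uK * vK ≠ 0 := mul_ne_zero uK_ne vK_ne

lemma MMt_mul (e f e' f' : ℤ) : MMt e f * MMt e' f' = MMt (e + e') (f + f') := by
  rw [MMt, MMt, MMt, zpow_add₀ tK_ne, zpow_add₀ qK_ne]; ring

lemma MMt_inv (e f : ℤ) : (MMt e f)⁻¹ = MMt (-e) (-f) := by
  rw [MMt, MMt, mul_inv, ← zpow_neg, ← zpow_neg]

lemma MMt_zpow (e f n : ℤ) : (MMt e f) ^ n = MMt (n * e) (n * f) := by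
  rw [MMt, MMt, mul_zpow, ← zpow_mul, ← zpow_mul, mul_comm e n, mul_comm f n]

lemma MMt_pow (e f : ℤ) (n : ℕ) : (MMt e f) ^ n = MMt (n * e) (n * f) := by
  rw [← zpow_natCast ((MMt e f)), MMt_zpow]

lemma tK_to : tK = MMt 1 0 := by simp [MMt]

lemma qK_to : uK * vK = MMt 0 1 := by simp [MMt]

lemma MMt_congr {e f e' f' : ℤ} (he : e = e') (hf : f = f') : MMt e f = MMt e' f' := by
  rw [he, hf]

/-- Key functional equation for `Zg`: `Z(1/(s·uv)) = Z(s)·s^{2−2g}(uv)^{1−g}`. -/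
lemma ZgA (g : ℕ) (s : K3) (hs : s ≠ 0) :
    Zg g ((s * (uK * vK))⁻¹)
      = Zg g s * ((s * s * (uK * vK))⁻¹) ^ g * (s * s * (uK * vK)) := by
  have hu := uK_ne; have hv := vK_ne
  have h1 : 1 - (s * (uK * vK))⁻¹ * uK = (1 - s * vK) * (-(s * vK)⁻¹) := by
    field_simp; ring
  have h2 : 1 - (s * (uK * vK))⁻¹ * vK = (1 - s * uK) * (-(s * uK)⁻¹) := by
    field_simp; ring
  have h3 : 1 - (s * (uK * vK))⁻¹ * uK * vK = (1 - s) * (-s⁻¹) := by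
    field_simp; ring
  have h4 : 1 - (s * (uK * vK))⁻¹ = (1 - s * uK * vK) * (-(s * uK * vK)⁻¹) := by
    field_simp; ring
  have key : ∀ A₁ A₂ B₁ B₂ c₁ c₂ d₁ d₂ E : K3, c₂ * c₁ = (E⁻¹) ^ g → d₁ * d₂ = E⁻¹ →
      A₂ * c₂ * (A₁ * c₁) / (B₁ * d₁ * (B₂ * d₂))
        = A₁ * A₂ / (B₂ * B₁) * (E⁻¹) ^ g * E := by
    intro A₁ A₂ B₁ B₂ c₁ c₂ d₁ d₂ E hc hd
    rw [show A₂ * c₂ * (A₁ * c₁) = A₁ * A₂ * (c₂ * c₁) by ring, hc,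
      show B₁ * d₁ * (B₂ * d₂) = B₂ * B₁ * (d₁ * d₂) by ring, hd]
    rcases eq_or_ne E 0 with rfl | hE
    · simp
    · rw [mul_div_mul_comm, div_eq_mul_inv (E⁻¹ ^ g), inv_inv, ← mul_assoc]
  have hc : (-(s * vK)⁻¹) ^ g * (-(s * uK)⁻¹) ^ g = ((s * s * (uK * vK))⁻¹) ^ g := by
    rw [← mul_pow]; congr 1
    rw [neg_mul_neg, ← mul_inv]; congr 1; ring
  have hd : -s⁻¹ * -(s * uK * vK)⁻¹ = (s * s * (uK * vK))⁻¹ := by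
    rw [neg_mul_neg, ← mul_inv]; congr 1; ring
  rw [Zg, Zg, h1, h2, h3, h4, mul_pow, mul_pow]
  exact key _ _ _ _ _ _ _ _ _ hc hd

/-- The one-cell functional equation: applying `σ` to the factor of `ℋ` attached to a
cell with arm `a` and leg `l` gives the factor attached to arm `l` and leg `a`. -/
lemma cell (g p : ℕ) (σ : K3 ≃+* K3) (hσu : σ uK = uK) (hσv : σ vK = vK)
    (hσt : σ tK = 1 / (tK * uK * vK)) (a l : ℕ) :
    σ ((-(tK ^ ((a : ℤ) - (l : ℤ)) * (uK * vK) ^ a)) ^ p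
        * tK ^ (((1 : ℤ) - g) * (2 * (l : ℤ) + 1))
        * Zg g (tK ^ (a + l + 1) * (uK * vK) ^ a))
      = (-(tK ^ ((l : ℤ) - (a : ℤ)) * (uK * vK) ^ l)) ^ p
        * tK ^ (((1 : ℤ) - g) * (2 * (a : ℤ) + 1))
        * Zg g (tK ^ (a + l + 1) * (uK * vK) ^ l) := by
  have hσt' : σ tK = (tK * (uK * vK))⁻¹ := by rw [hσt, one_div, mul_assoc]
  have hσZ : ∀ w : K3, σ (Zg g w) = Zg g (σ w) := by
    intro w
    simp only [Zg, map_div₀, map_mul, map_pow, map_sub, map_one, hσu, hσv]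
  have hs'' : tK ^ (a + l + 1) * (uK * vK) ^ l ≠ 0 :=
    mul_ne_zero (pow_ne_zero _ tK_ne) (pow_ne_zero _ qK_ne)
  have harg : ((tK * (uK * vK))⁻¹) ^ (a + l + 1) * (uK * vK) ^ a
      = ((tK ^ (a + l + 1) * (uK * vK) ^ l) * (uK * vK))⁻¹ := by
    simp only [tK_to, qK_to, MMt_mul, MMt_inv, MMt_pow, MMt_zpow]
    exact MMt_congr (by push_cast; ring) (by push_cast; ring)
  have hA : ((tK * (uK * vK))⁻¹) ^ ((a : ℤ) - (l : ℤ)) * (uK * vK) ^ a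
      = tK ^ ((l : ℤ) - (a : ℤ)) * (uK * vK) ^ l := by
    simp only [tK_to, qK_to, MMt_mul, MMt_inv, MMt_pow, MMt_zpow]
    exact MMt_congr (by push_cast; ring) (by push_cast; ring)
  have hB : ((tK * (uK * vK))⁻¹) ^ (((1 : ℤ) - g) * (2 * (l : ℤ) + 1))
      * (((tK ^ (a + l + 1) * (uK * vK) ^ l) * (tK ^ (a + l + 1) * (uK * vK) ^ l)
          * (uK * vK))⁻¹) ^ g
      * ((tK ^ (a + l + 1) * (uK * vK) ^ l) * (tK ^ (a + l + 1) * (uK * vK) ^ l)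
          * (uK * vK))
      = tK ^ (((1 : ℤ) - g) * (2 * (a : ℤ) + 1)) := by
    simp only [tK_to, qK_to, MMt_mul, MMt_inv, MMt_pow, MMt_zpow]
    exact MMt_congr (by push_cast; ring) (by push_cast; ring)
  calc σ ((-(tK ^ ((a : ℤ) - (l : ℤ)) * (uK * vK) ^ a)) ^ p
        * tK ^ (((1 : ℤ) - g) * (2 * (l : ℤ) + 1))
        * Zg g (tK ^ (a + l + 1) * (uK * vK) ^ a))
      = (-(((tK * (uK * vK))⁻¹) ^ ((a : ℤ) - (l : ℤ)) * (uK * vK) ^ a)) ^ p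
        * ((tK * (uK * vK))⁻¹) ^ (((1 : ℤ) - g) * (2 * (l : ℤ) + 1))
        * Zg g (((tK * (uK * vK))⁻¹) ^ (a + l + 1) * (uK * vK) ^ a) := by
        simp only [map_mul, map_pow, map_neg, map_zpow₀, hσZ, hσt', hσu, hσv]
    _ = (-(tK ^ ((l : ℤ) - (a : ℤ)) * (uK * vK) ^ l)) ^ p
        * ((tK * (uK * vK))⁻¹) ^ (((1 : ℤ) - g) * (2 * (l : ℤ) + 1))
        * (Zg g (tK ^ (a + l + 1) * (uK * vK) ^ l)
          * (((tK ^ (a + l + 1) * (uK * vK) ^ l) * (tK ^ (a + l + 1) * (uK * vK) ^ l)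
              * (uK * vK))⁻¹) ^ g
          * ((tK ^ (a + l + 1) * (uK * vK) ^ l) * (tK ^ (a + l + 1) * (uK * vK) ^ l)
              * (uK * vK))) := by
        rw [hA, harg, ZgA g _ hs'']
    _ = (-(tK ^ ((l : ℤ) - (a : ℤ)) * (uK * vK) ^ l)) ^ p
        * (((tK * (uK * vK))⁻¹) ^ (((1 : ℤ) - g) * (2 * (l : ℤ) + 1))
          * (((tK ^ (a + l + 1) * (uK * vK) ^ l) * (tK ^ (a + l + 1) * (uK * vK) ^ l)
              * (uK * vK))⁻¹) ^ g
          * ((tK ^ (a + l + 1) * (uK * vK) ^ l) * (tK ^ (a + l + 1) * (uK * vK) ^ l)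
              * (uK * vK)))
        * Zg g (tK ^ (a + l + 1) * (uK * vK) ^ l) := by ring
    _ = (-(tK ^ ((l : ℤ) - (a : ℤ)) * (uK * vK) ^ l)) ^ p
        * tK ^ (((1 : ℤ) - g) * (2 * (a : ℤ) + 1))
        * Zg g (tK ^ (a + l + 1) * (uK * vK) ^ l) := by rw [hB]

lemma mem_cells_transpose_swap {μ : YoungDiagram} {a : ℕ × ℕ} :
    a.swap ∈ μ.transpose.cells ↔ a ∈ μ.cells := by
  simp [YoungDiagram.mem_cells, YoungDiagram.mem_transpose]

lemma card_transpose (μ : YoungDiagram) : μ.transpose.cells.card = μ.cells.card := by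
  refine Finset.card_bij' (fun x _ => x.swap) (fun x _ => x.swap) ?_ ?_ ?_ ?_
  · intro a ha
    exact mem_cells_transpose_swap.mp (by rwa [Prod.swap_swap])
  · intro a ha
    exact mem_cells_transpose_swap.mpr ha
  · intro a _; exact Prod.swap_swap a
  · intro a _; exact Prod.swap_swap a

lemma sigma_Hp (g p : ℕ) (σ : K3 ≃+* K3) (hσu : σ uK = uK) (hσv : σ vK = vK)
    (hσt : σ tK = 1 / (tK * uK * vK)) (μ : YoungDiagram) :
    σ (Hp g p μ) = Hp g p μ.transpose := by
  rw [Hp, map_prod, Hp]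
  refine Finset.prod_bij' (fun x _ => x.swap) (fun x _ => x.swap) ?_ ?_ ?_ ?_ ?_
  · intro a ha
    exact mem_cells_transpose_swap.mpr ha
  · intro a ha
    have : a.swap.swap ∈ μ.transpose.cells := by rwa [Prod.swap_swap]
    exact mem_cells_transpose_swap.mp this
  · intro a _; exact Prod.swap_swap a
  · intro a _; exact Prod.swap_swap a
  · intro x _
    have harm : μ.transpose.armLen x.swap = μ.legLen x := by
      simp [YoungDiagram.armLen, YoungDiagram.legLen, YoungDiagram.rowLen_transpose]
    have hleg : μ.transpose.legLen x.swap = μ.armLen x := by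
      simp [YoungDiagram.armLen, YoungDiagram.legLen, YoungDiagram.colLen_transpose]
    have hhook : μ.transpose.hookLen x.swap = μ.armLen x + μ.legLen x + 1 := by
      rw [YoungDiagram.hookLen, harm, hleg, Nat.add_comm (μ.legLen x)]
    rw [harm, hleg, hhook, show μ.hookLen x = μ.armLen x + μ.legLen x + 1 from rfl]
    exact cell g p σ hσu hσv hσt (μ.armLen x) (μ.legLen x)

/-- Fix `g p : ℕ` and let `σ` be the automorphism of `ℚ(t,u,v)` fixing
`u` and `v` and sending `t ↦ 1/(tuv)`. For every natural number `n`,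
`σ( Σ_{|λ|=n} ℋ^{(p)}_λ(t,u,v) ) = Σ_{|λ|=n} ℋ^{(p)}_λ(t,u,v)`, the (finite) sums
running over all partitions `λ` of `n`, written as `finsum`s over all Young diagrams
with `n` cells. -/
theorem sigma_sum_Hp_eq_sum_Hp (g p : ℕ)
    (σ : K3 ≃+* K3) (hσu : σ uK = uK) (hσv : σ vK = vK)
    (hσt : σ tK = 1 / (tK * uK * vK)) (n : ℕ) :
    σ (∑ᶠ (μ : YoungDiagram) (_ : μ.cells.card = n), Hp g p μ)
      = ∑ᶠ (μ : YoungDiagram) (_ : μ.cells.card = n), Hp g p μ := by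
  let e : YoungDiagram ≃ YoungDiagram :=
    ⟨YoungDiagram.transpose, YoungDiagram.transpose,
      YoungDiagram.transpose_transpose, YoungDiagram.transpose_transpose⟩
  calc σ (∑ᶠ (μ : YoungDiagram) (_ : μ.cells.card = n), Hp g p μ)
      = ∑ᶠ (μ : YoungDiagram), σ (∑ᶠ (_ : μ.cells.card = n), Hp g p μ) :=
        σ.toAddEquiv.map_finsum _
    _ = ∑ᶠ (μ : YoungDiagram) (_ : μ.cells.card = n), σ (Hp g p μ) := by
        exact finsum_congr fun μ => σ.toAddEquiv.map_finsum _
    _ = ∑ᶠ (μ : YoungDiagram) (_ : (e μ).cells.card = n), Hp g p (e μ) := by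
        apply finsum_congr; intro μ
        have hcard : (μ.cells.card = n) = ((e μ).cells.card = n) := by
          simp only [e, Equiv.coe_fn_mk]
          rw [card_transpose]
        rw [← hcard]
        exact finsum_congr fun _ => sigma_Hp g p σ hσu hσv hσt μ
    _ = ∑ᶠ (μ : YoungDiagram) (_ : μ.cells.card = n), Hp g p μ :=
        finsum_comp_equiv e (f := fun μ => ∑ᶠ (_ : μ.cells.card = n), Hp g p μ)
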